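/- For every σ ∈ [0, π/2] and every θ ∈ ℝ, the pair of curves q(t) = (t cos θ, t sin θ, (1/4) t² cos σ sin(2θ)) and p(t) = (cos θ, sin θ, 0) satisfies Hamilton's equations q̇ = ∂H/∂p, ṗ = −∂H/∂q for the Hamiltonian H(x,y,z,p_x,p_y,p_z) = ½(p_x² + (p_y + x cos σ · p_z)² + x² sin²σ · p_z²), with initial conditions q(0) = (0,0,0) and p(0) = (cos θ, sin θ, 0). -/

import Mathlib

open Real

/-- The Hamiltonian `H(q,p) = ½(p_x² + (p_y + x cos σ p_z)² + x² sin²σ p_z²)`. -/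
noncomputable def Ham (σ : ℝ) (q p : Fin 3 → ℝ) : ℝ :=
  (1 / 2) * ((p 0) ^ 2 + (p 1 + q 0 * cos σ * p 2) ^ 2
    + (q 0) ^ 2 * sin σ ^ 2 * (p 2) ^ 2)

/-- The geodesic with `a = 0`: `q(t) = (t cos θ, t sin θ, ¼ t² cos σ sin 2θ)`. -/
noncomputable def qZero (σ θ t : ℝ) : Fin 3 → ℝ :=
  ![t * cos θ, t * sin θ, (1 / 4) * t ^ 2 * cos σ * sin (2 * θ)]

/-- The (constant) covector curve `p(t) = (cos θ, sin θ, 0)`. -/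
noncomputable def pZero (θ t : ℝ) : Fin 3 → ℝ :=
  ![cos θ, sin θ, 0]

private lemma deriv_half_sq_add_const (c x : ℝ) :
    deriv (fun v : ℝ => (1 / 2) * (v ^ 2 + c)) x = x := by
  have h : HasDerivAt (fun v : ℝ => (1 / 2) * (v ^ 2 + c)) x x := by
    have := ((hasDerivAt_pow 2 x).add_const c).const_mul (1 / 2 : ℝ)
    exact this.congr_deriv (by push_cast; ring)
  exact h.deriv

/-- For every `σ ∈ [0,π/2]` and `θ ∈ ℝ`, the pair
`q(t) = (t cos θ, t sin θ, ¼ t² cos σ sin 2θ)`, `p(t) = (cos θ, sin θ, 0)`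
solves Hamilton's equations `q̇ = ∂H/∂p`, `ṗ = −∂H/∂q` with
`q(0) = (0,0,0)` and `p(0) = (cos θ, sin θ, 0)`. -/
theorem stmt1 (σ θ : ℝ) (hσ : σ ∈ Set.Icc 0 (π / 2)) :
    qZero σ θ 0 = ![0, 0, 0] ∧
    pZero θ 0 = ![cos θ, sin θ, 0] ∧
    (∀ t : ℝ, ∀ i : Fin 3,
      HasDerivAt (fun s => qZero σ θ s i)
        (deriv (fun v => Ham σ (qZero σ θ t) (Function.update (pZero θ t) i v))
          (pZero θ t i)) t ∧
      HasDerivAt (fun s => pZero θ s i)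
        (-(deriv (fun v => Ham σ (Function.update (qZero σ θ t) i v) (pZero θ t))
          (qZero σ θ t i))) t) := by
  refine ⟨by funext i; fin_cases i <;> simp [qZero], rfl, fun t i => ?_⟩
  have h3 : i = 0 ∨ i = 1 ∨ i = 2 := by omega
  rcases h3 with rfl | rfl | rfl
  · constructor
    · have hfn : (fun v => Ham σ (qZero σ θ t) (Function.update (pZero θ t) 0 v))
          = fun v : ℝ => (1 / 2) * (v ^ 2 + (sin θ) ^ 2) := by
        funext v
        simp [Ham, qZero, pZero, Function.update]
        try ring
      rw [hfn, deriv_half_sq_add_const]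
      simp only [pZero, qZero, Matrix.cons_val_zero]
      simpa using (hasDerivAt_id t).mul_const (cos θ)
    · have hfn : (fun v => Ham σ (Function.update (qZero σ θ t) 0 v) (pZero θ t))
          = fun v : ℝ => (1 / 2) * ((cos θ) ^ 2 + (sin θ) ^ 2) := by
        funext v
        simp [Ham, qZero, pZero, Function.update]
      rw [hfn]
      simp only [deriv_const, neg_zero, pZero, Matrix.cons_val_zero]
      exact hasDerivAt_const t (cos θ)
  · constructor
    · have hfn : (fun v => Ham σ (qZero σ θ t) (Function.update (pZero θ t) 1 v))
          = fun v : ℝ => (1 / 2) * (v ^ 2 + (cos θ) ^ 2) := by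
        funext v
        simp [Ham, qZero, pZero, Function.update]
        try ring
      rw [hfn, deriv_half_sq_add_const]
      simp only [pZero, qZero, Matrix.cons_val_one, Matrix.head_cons]
      simpa using (hasDerivAt_id t).mul_const (sin θ)
    · have hfn : (fun v => Ham σ (Function.update (qZero σ θ t) 1 v) (pZero θ t))
          = fun v : ℝ => (1 / 2) * ((cos θ) ^ 2 + (sin θ) ^ 2) := by
        funext v
        simp [Ham, qZero, pZero, Function.update]
      rw [hfn]
      simp only [deriv_const, neg_zero, pZero, Matrix.cons_val_one, Matrix.head_cons]
      exact hasDerivAt_const t (sin θ)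
  · constructor
    · have hfn : (fun v => Ham σ (qZero σ θ t) (Function.update (pZero θ t) 2 v))
          = fun v : ℝ => (1 / 2) * ((cos θ) ^ 2 + (sin θ + (t * cos θ * cos σ) * v) ^ 2
              + ((t * cos θ) ^ 2 * (sin σ) ^ 2) * v ^ 2) := by
        funext v
        simp [Ham, qZero, pZero, Function.update]
        try ring
      have hd : HasDerivAt (fun v : ℝ => (1 / 2) * ((cos θ) ^ 2
            + (sin θ + (t * cos θ * cos σ) * v) ^ 2
            + ((t * cos θ) ^ 2 * (sin σ) ^ 2) * v ^ 2))
          (t * cos σ * sin θ * cos θ) 0 := by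
        have h1 : HasDerivAt (fun v : ℝ => sin θ + (t * cos θ * cos σ) * v)
            (t * cos θ * cos σ) 0 := by
          simpa using ((hasDerivAt_id (0 : ℝ)).const_mul (t * cos θ * cos σ)).const_add (sin θ)
        have h2 := h1.pow 2
        have h3 := (hasDerivAt_pow 2 (0 : ℝ)).const_mul ((t * cos θ) ^ 2 * (sin σ) ^ 2)
        have := ((h2.const_add ((cos θ) ^ 2)).add h3).const_mul (1 / 2 : ℝ)
        exact this.congr_deriv (by push_cast; ring)
      rw [hfn]
      have h0 : pZero θ t 2 = 0 := by simp [pZero]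
      rw [h0, hd.deriv]
      have hq : HasDerivAt (fun s : ℝ => (1 / 4) * s ^ 2 * cos σ * sin (2 * θ))
          (t * cos σ * sin θ * cos θ) t := by
        have h := (hasDerivAt_pow 2 t).const_mul (1 / 4 * cos σ * sin (2 * θ))
        have heq : (fun s : ℝ => (1 / 4) * s ^ 2 * cos σ * sin (2 * θ))
            = fun s : ℝ => 1 / 4 * cos σ * sin (2 * θ) * s ^ 2 := by funext s; ring
        rw [heq]
        exact h.congr_deriv (by rw [sin_two_mul]; push_cast; ring)
      simpa [qZero] using hq
    · have hfn : (fun v => Ham σ (Function.update (qZero σ θ t) 2 v) (pZero θ t))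
          = fun v : ℝ => (1 / 2) * ((cos θ) ^ 2 + (sin θ) ^ 2) := by
        funext v
        simp [Ham, qZero, pZero, Function.update]
      rw [hfn]
      simp only [deriv_const, neg_zero, pZero]
      exact hasDerivAt_const t _
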